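/- For every frame F = (S,R): R is symmetric (for all x,y, xRy implies yRx) if and only if the LEA-formula p → ∘(∘¬p → p) is valid on F. Hence the frame property of symmetry is definable in LEA. -/
import Mathlib


/-- The language LEA of essence and accident. -/
inductive LEAForm : Type
  | atom : ℕ → LEAForm
  | neg : LEAForm → LEAForm
  | and : LEAForm → LEAForm → LEAForm
  | ess : LEAForm → LEAForm

/-- A Kripke model (the frame is (W, R)). -/
structure Model (W : Type) where
  R : W → W → Prop
  V : ℕ → W → Prop

/-- Satisfaction for LEA. -/
def satLEA {W : Type} (M : Model W) : W → LEAForm → Prop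
  | w, .atom p => M.V p w
  | w, .neg φ => ¬ satLEA M w φ
  | w, .and φ ψ => satLEA M w φ ∧ satLEA M w ψ
  | w, .ess φ => satLEA M w φ → ∀ v, M.R w v → satLEA M v φ

/-- Implication, defined as usual. -/
def impF (φ ψ : LEAForm) : LEAForm := .neg (.and φ (.neg ψ))
/-- A frame (S,R) is symmetric iff p → ∘(∘¬p → p) is valid on it:
symmetry is definable in LEA. -/
theorem stmt5 (W : Type) [Nonempty W] (R : W → W → Prop) :
    (∀ x y, R x y → R y x) ↔
      (∀ (V : ℕ → W → Prop) (s : W),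
        satLEA ⟨R, V⟩ s
          (impF (.atom 0) (.ess (impF (.ess (.neg (.atom 0))) (.atom 0))))) := by
  constructor
  · intro hsym V s
    simp only [satLEA, impF, not_and, not_not]
    intro hp _ t hst hess
    by_contra hpt
    exact hess hpt s (hsym s t hst) hp
  · intro hval x y hxy
    by_contra hnyx
    have h := hval (fun _ w => w = x) x
    simp only [satLEA, impF, not_and, not_not] at h
    have h2 := h trivial (fun _ => trivial) y hxy
    have hyx : y ≠ x := fun he => hnyx (he ▸ hxy)
    exact hyx (h2 (fun _ v hv hvx => hnyx (hvx ▸ hv)))
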